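/- With the rectangle $K = [0,\xi]\times[0,\eta]$ and Gauss points $g_{ij}$ as above, every $p \in P_2(K)$ satisfies $\theta_1(p(g_{11}) - p(g_{12})) + (\theta_2 - \theta_1)(p(g_{22}) - p(g_{41})) + \theta_2(p(g_{32}) - p(g_{31})) = 0$, where $\theta_1 = \tfrac12(1-1/\sqrt3)$ and $\theta_2 = \tfrac12(1+1/\sqrt3)$. -/

import Mathlib

open MvPolynomial

/-! Both sides are linear in `p`, so it suffices to check the six monomials `x^a y^b` with
`a + b ≤ 2`. On each of them the combination vanishes as soon as `θ₁ + θ₂ = 1`. -/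

theorem MvPolynomial.linearMap_eq_zero_of_totalDegree_le {R σ M : Type*} [CommSemiring R]
    [AddCommMonoid M] [Module R M] (L : MvPolynomial σ R →ₗ[R] M) {n : ℕ}
    (hL : ∀ d : σ →₀ ℕ, d.degree ≤ n → L (monomial d 1) = 0)
    {p : MvPolynomial σ R} (hp : p.totalDegree ≤ n) : L p = 0 := by
  rw [p.as_sum, map_sum]
  refine Finset.sum_eq_zero fun d hd => ?_
  rw [← mul_one (coeff d p), ← smul_eq_mul, ← smul_monomial, map_smul,
    hL d ((le_totalDegree hd).trans hp), smul_zero]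

theorem MvPolynomial.eval_monomial_one_fin_two {R : Type*} [CommSemiring R] (v : Fin 2 → R)
    (d : Fin 2 →₀ ℕ) : eval v (monomial d 1) = v 0 ^ d 0 * v 1 ^ d 1 := by
  rw [eval_monomial, one_mul, Finsupp.prod_fintype _ _ fun _ => pow_zero _, Fin.prod_univ_two]

/-- The combination of point values at the edge Gauss points `g₁₁, g₁₂, g₂₂, g₄₁, g₃₂, g₃₁`. -/
noncomputable def edgeGaussCombination (ξ η θ₁ θ₂ : ℝ) : MvPolynomial (Fin 2) ℝ →ₗ[ℝ] ℝ :=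
  let ev : (Fin 2 → ℝ) → MvPolynomial (Fin 2) ℝ →ₗ[ℝ] ℝ := fun v => (aeval v).toLinearMap
  θ₁ • (ev ![θ₁ * ξ, 0] - ev ![θ₂ * ξ, 0]) + (θ₂ - θ₁) • (ev ![ξ, θ₂ * η] - ev ![0, θ₂ * η])
    + θ₂ • (ev ![θ₁ * ξ, η] - ev ![θ₂ * ξ, η])

theorem edgeGaussCombination_apply (ξ η θ₁ θ₂ : ℝ) (p : MvPolynomial (Fin 2) ℝ) :
    edgeGaussCombination ξ η θ₁ θ₂ p =
      θ₁ * (eval ![θ₁ * ξ, 0] p - eval ![θ₂ * ξ, 0] p)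
        + (θ₂ - θ₁) * (eval ![ξ, θ₂ * η] p - eval ![(0 : ℝ), θ₂ * η] p)
        + θ₂ * (eval ![θ₁ * ξ, η] p - eval ![θ₂ * ξ, η] p) := by
  simp [edgeGaussCombination]

theorem edgeGaussCombination_monomial_eq_zero {ξ η θ₁ θ₂ : ℝ} (hθ : θ₁ + θ₂ = 1)
    (d : Fin 2 →₀ ℕ) (hd : d.degree ≤ 2) : edgeGaussCombination ξ η θ₁ θ₂ (monomial d 1) = 0 := by
  have hd' : d 0 + d 1 ≤ 2 := by rwa [Finsupp.degree_eq_sum, Fin.sum_univ_two] at hd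
  obtain rfl : θ₁ = 1 - θ₂ := by linarith
  simp only [edgeGaussCombination_apply, eval_monomial_one_fin_two, Matrix.cons_val_zero,
    Matrix.cons_val_one, Matrix.cons_val_fin_one]
  have h0 : d 0 ≤ 2 := by omega
  have h1 : d 1 ≤ 2 := by omega
  interval_cases d 0 <;> interval_cases d 1 <;> first | omega | ring

theorem stmt6_general (ξ η : ℝ)
    (θ₁ θ₂ : ℝ) (hθ₁ : θ₁ = (1 - 1 / Real.sqrt 3) / 2) (hθ₂ : θ₂ = (1 + 1 / Real.sqrt 3) / 2)
    (p : MvPolynomial (Fin 2) ℝ) (hp : p.totalDegree ≤ 2) :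
    θ₁ * (eval ![θ₁ * ξ, 0] p - eval ![θ₂ * ξ, 0] p)
      + (θ₂ - θ₁) * (eval ![ξ, θ₂ * η] p - eval ![(0 : ℝ), θ₂ * η] p)
      + θ₂ * (eval ![θ₁ * ξ, η] p - eval ![θ₂ * ξ, η] p) = 0 := by
  have hθ : θ₁ + θ₂ = 1 := by rw [hθ₁, hθ₂]; ring
  rw [← edgeGaussCombination_apply]
  exact linearMap_eq_zero_of_totalDegree_le _ (edgeGaussCombination_monomial_eq_zero hθ) hp

/-- Third compatibility condition at the edge Gauss points (Lemma A.1, (A.4)). -/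
theorem stmt6 (ξ η : ℝ) (hξ : 0 < ξ) (hη : 0 < η)
    (θ₁ θ₂ : ℝ) (hθ₁ : θ₁ = (1 - 1 / Real.sqrt 3) / 2) (hθ₂ : θ₂ = (1 + 1 / Real.sqrt 3) / 2)
    (p : MvPolynomial (Fin 2) ℝ) (hp : p.totalDegree ≤ 2) :
    θ₁ * (eval ![θ₁ * ξ, 0] p - eval ![θ₂ * ξ, 0] p)
      + (θ₂ - θ₁) * (eval ![ξ, θ₂ * η] p - eval ![(0 : ℝ), θ₂ * η] p)
      + θ₂ * (eval ![θ₁ * ξ, η] p - eval ![θ₂ * ξ, η] p) = 0 :=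
  stmt6_general ξ η θ₁ θ₂ hθ₁ hθ₂ p hp
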